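/- arXiv:2510.09919 — 3 statements merged into one kernel-verified Lean document; each statement's English description precedes it below -/
import Mathlib

section
/- Existence of a moment-matched two-point pair: for every integer k ≥ 1 there exist a constant C_k > 0 and vectors u, v ∈ ℝ^k with ‖u‖_∞ ≤ 1 and ‖v‖_∞ ≤ 1 such that (i) m_1(u) = 0; (ii) m_p(u) = m_p(v) for all p = 1,…,k−1; and (iii) min{ W(u,v), |m_k(u) − m_k(v)| } ≥ C_k. -/
/-!
Take for `u` and `v` the abscissae `cos (2πj/k)` and `cos ((2j+1)π/k)` of the vertices of two
regular `k`-gons, one rotated by `π/k` against the other. Expanding `cos^p` into the frequencies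
`2t - p` (`0 ≤ t ≤ p`) and summing over the vertices kills every frequency not divisible by `k`.
For `p < k` only the frequency `0` survives, and it does not see the rotation; for `p = k` the
frequencies `±k` survive as well and contribute `2^(1-k) k cos (kθ)`, which is `±2^(1-k) k` for the
two polygons. By parity the two polygons share no abscissa, so `W(u,v) > 0`, and `C` can be taken
to be the smaller of the two positive quantities. For `k = 1` take `u = 0`, `v = 1`.
-/

open MeasureTheory ProbabilityTheory Real
open scoped ENNReal NNReal

noncomputable section

/-- The probability simplex in `ℝ^k`. -/
def simplex (k : ℕ) : Set (Fin k → ℝ) := {c | (∀ i, 0 ≤ c i) ∧ ∑ i, c i = 1}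

/-- The Euclidean (ℓ₂) norm of a vector. -/
def l2norm {k : ℕ} (v : Fin k → ℝ) : ℝ := Real.sqrt (∑ i, v i ^ 2)

/-- The sorted (permutation-invariant) ℓ₁ loss `W`. -/
def sortedLoss {k : ℕ} (c c' : Fin k → ℝ) : ℝ :=
  ⨅ σ : Equiv.Perm (Fin k), ∑ i, |c (σ i) - c' i|

/-- The exponential measure with rate `r`. -/
def expMeas (r : ℝ) : Measure ℝ :=
  MeasureTheory.volume.withDensity fun x =>
    ENNReal.ofReal (if 0 ≤ x then r * Real.exp (-(r * x)) else 0)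

/-- The flat Dirichlet distribution on the simplex `Δ_d`: law of the normalization of
`d` i.i.d. rate-`d` exponential random variables. -/
def flatDirichlet (d : ℕ) : Measure (Fin d → ℝ) :=
  (Measure.pi fun _ : Fin d => expMeas d).map fun x j => x j / ∑ j', x j'

/-- Condition (PT): law of a random `k × d` matrix with i.i.d. flat-Dirichlet rows. -/
def ptLaw (k d : ℕ) : Measure (Fin k → Fin d → ℝ) :=
  Measure.pi fun _ : Fin k => flatDirichlet d

/-- Categorical measure on `Fin d` with weight vector `p`. -/
def catMeas {d : ℕ} (p : Fin d → ℝ) : Measure (Fin d) :=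
  ∑ j : Fin d, ENNReal.ofReal (p j) • Measure.dirac j

/-- The mixture pmf `j ↦ ∑_i c_i Π_{ij}`. -/
def mixP {k d : ℕ} (c : Fin k → ℝ) (P : Fin k → Fin d → ℝ) : Fin d → ℝ :=
  fun j => ∑ i, c i * P i j

/-- Joint law of the data `(Z, W)` in the multinomial model: conditionally on a (PT)
matrix `Π`, the `Z_ℓ` are i.i.d. from `∑_i c_i Π_{i·}` and the `W_{ir}` are i.i.d. from
`Π_{i·}`, all independent. -/
def dataLaw (n d k m : ℕ) (c : Fin k → ℝ) :
    Measure ((Fin n → Fin d) × (Fin k → Fin m → Fin d)) :=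
  (ptLaw k d).bind fun P =>
    (Measure.pi fun _ : Fin n => catMeas (mixP c P)).prod
      (Measure.pi fun i : Fin k => Measure.pi fun _ : Fin m => catMeas (P i))

/-- Law of the `Z`-samples alone (the `m = 0` multinomial model). -/
def dataLawZ (n d k : ℕ) (c : Fin k → ℝ) : Measure (Fin n → Fin d) :=
  (ptLaw k d).bind fun P => Measure.pi fun _ : Fin n => catMeas (mixP c P)

/-- Minimax ℓ₂ risk `M(n,d,k,m)` in the multinomial model. -/
def minimaxRisk (n d k m : ℕ) : ℝ≥0∞ :=
  ⨅ (est : ((Fin n → Fin d) × (Fin k → Fin m → Fin d)) → (Fin k → ℝ))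
    (_ : Measurable est),
    ⨆ c ∈ simplex k,
      ∫⁻ x, ENNReal.ofReal (l2norm fun i => est x i - c i) ∂ dataLaw n d k m c

/-- Sorted minimax risk `M_<(n,d,k,m)` in the multinomial model. -/
def sortedRisk (n d k m : ℕ) : ℝ≥0∞ :=
  ⨅ (est : ((Fin n → Fin d) × (Fin k → Fin m → Fin d)) → (Fin k → ℝ))
    (_ : Measurable est),
    ⨆ c ∈ simplex k,
      ∫⁻ x, ENNReal.ofReal (sortedLoss (est x) c) ∂ dataLaw n d k m c

/-- Poisson measure on ℕ with mean `r`. -/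
def poissonMeas (r : ℝ) : Measure ℕ :=
  Measure.sum fun x : ℕ =>
    ENNReal.ofReal (Real.exp (-r) * r ^ x / Nat.factorial x) • Measure.dirac x

/-- The unnormalized Poisson model `Q_c` on `ℕ × ℕ^k`. -/
def unnormQ (n m d k : ℕ) (c : Fin k → ℝ) : Measure (ℕ × (Fin k → ℕ)) :=
  (Measure.pi fun _ : Fin k => expMeas d).bind fun w =>
    (poissonMeas (n * ∑ i, c i * w i)).prod
      (Measure.pi fun i : Fin k => poissonMeas (m * w i))

/-- The Poisson–exponential mixture `Q'_c` on ℕ. -/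
def mixQ (n d k : ℕ) (c : Fin k → ℝ) : Measure ℕ :=
  (Measure.pi fun _ : Fin k => expMeas d).bind fun w =>
    poissonMeas (n * ∑ i, c i * w i)

/-- Condition (S) with parameter `γ`, with `ρ = min (m/d) 1`. -/
def condS (γ : ℝ) (n d k m : ℕ) : Prop :=
  (n : ℝ) ^ ((1 : ℝ) + γ) ≤ (d : ℝ) ∧
  ((n : ℝ) * m ≤ d ∨ (d : ℝ) ^ ((1 : ℝ) + γ) < (n : ℝ) * m) ∧
  ((k : ℝ) ≤ Real.sqrt ((n : ℝ) * min ((m : ℝ) / d) 1) ∨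
    Real.sqrt ((n : ℝ) * min ((m : ℝ) / d) 1) ^ ((1 : ℝ) + γ) < (k : ℝ)) ∧
  ((k ≤ d ∧ d ≤ m) ∨
    ((m : ℝ) ^ ((1 : ℝ) + γ) < (d : ℝ) ∧ (k : ℝ) ^ ((1 : ℝ) + γ) < (d : ℝ) / m))

theorem sum_range_exp_two_pi_I_mul_div (k : ℕ) (hk : k ≠ 0) (n : ℤ) :
    ∑ j ∈ Finset.range k, Complex.exp (2 * π * Complex.I * n * j / k) =
      if (k : ℤ) ∣ n then (k : ℂ) else 0 := by
  set ζ := Complex.exp (2 * π * Complex.I / k)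
  have hζ : IsPrimitiveRoot ζ k := Complex.isPrimitiveRoot_exp k hk
  have hterm : ∀ j : ℕ, Complex.exp (2 * π * Complex.I * n * j / k) = (ζ ^ n) ^ j := fun j => by
    rw [← zpow_natCast, ← zpow_mul, ← Complex.exp_int_mul]
    push_cast
    ring_nf
  simp_rw [hterm]
  split_ifs with hdvd
  · simp [(hζ.zpow_eq_one_iff_dvd n).2 hdvd]
  · have hw : ζ ^ n ≠ 1 := mt (hζ.zpow_eq_one_iff_dvd n).1 hdvd
    have hwk : (ζ ^ n) ^ k = 1 := by
      rw [← zpow_natCast, ← zpow_mul, mul_comm, zpow_mul, zpow_natCast, hζ.pow_eq_one, one_zpow]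
    rw [geom_sum_eq hw, hwk, sub_self, zero_div]

theorem Complex.cos_pow_eq_sum_exp (z : ℂ) (p : ℕ) :
    cos z ^ p =
      (∑ t ∈ Finset.range (p + 1), (p.choose t : ℂ) * exp ((2 * t - p) * z * I)) / 2 ^ p := by
  rw [Complex.cos, div_pow, add_pow]
  congr 1
  refine Finset.sum_congr rfl fun t ht => ?_
  have htp : t ≤ p := Nat.lt_succ_iff.mp (Finset.mem_range.mp ht)
  rw [← exp_nat_mul, ← exp_nat_mul, ← exp_add, Nat.cast_sub htp]
  ring_nf

theorem int_dvd_two_mul_sub_iff_of_lt {k p t : ℕ} (htp : t ≤ p) (hpk : p < k) :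
    (k : ℤ) ∣ 2 * t - p ↔ 2 * t = p := by
  refine ⟨fun h => ?_, fun h => by simp [← h]⟩
  have := Int.eq_zero_of_abs_lt_dvd h (by rw [abs_lt]; omega)
  omega

theorem int_dvd_two_mul_sub_self_iff {k t : ℕ} (htk : t ≤ k) :
    (k : ℤ) ∣ 2 * t - k ↔ 2 * t = k ∨ t = 0 ∨ t = k := by
  refine ⟨fun h => ?_, ?_⟩
  · by_contra hne
    have := Int.eq_zero_of_abs_lt_dvd h (by rw [abs_lt]; omega)
    omega
  · rintro (h | rfl | rfl)
    · simp [← h]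
    · simp
    · exact ⟨1, by ring⟩

def equispacedCos (k : ℕ) (θ : ℝ) (j : Fin k) : ℝ := cos (θ + 2 * π * j / k)

theorem sum_equispacedCos_pow (k p : ℕ) (hk : k ≠ 0) (θ : ℝ) :
    ∑ j, equispacedCos k θ j ^ p =
      k / 2 ^ p * ∑ t ∈ (Finset.range (p + 1)).filter (fun t : ℕ => (k : ℤ) ∣ 2 * t - p),
        (p.choose t : ℝ) * cos ((2 * t - p) * θ) := by
  have hℂ : ((∑ j, equispacedCos k θ j ^ p : ℝ) : ℂ) =
      ((k / 2 ^ p : ℝ) : ℂ) *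
        ∑ t ∈ (Finset.range (p + 1)).filter (fun t : ℕ => (k : ℤ) ∣ 2 * t - p),
          ((p.choose t : ℝ) : ℂ) * Complex.exp (((2 * t - p) * θ : ℝ) * Complex.I) := by
    simp only [equispacedCos]
    push_cast
    have hfreq : ∀ t : ℕ, ∑ j ∈ Finset.range k,
        Complex.exp ((2 * t - p) * (θ + 2 * π * j / k) * Complex.I) =
          Complex.exp ((2 * t - p) * θ * Complex.I) *
            if (k : ℤ) ∣ 2 * t - p then (k : ℂ) else 0 := fun t => by
      rw [← sum_range_exp_two_pi_I_mul_div k hk, Finset.mul_sum]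
      refine Finset.sum_congr rfl fun j _ => ?_
      rw [← Complex.exp_add]
      push_cast
      ring_nf
    simp_rw [Complex.cos_pow_eq_sum_exp, ← Finset.sum_div]
    rw [Fin.sum_univ_eq_sum_range (fun j => ∑ t ∈ Finset.range (p + 1), (p.choose t : ℂ) *
        Complex.exp ((2 * t - p) * (θ + 2 * π * j / k) * Complex.I)), Finset.sum_comm]
    simp_rw [← Finset.mul_sum, hfreq, Finset.sum_filter, Finset.mul_sum, Finset.sum_div]
    refine Finset.sum_congr rfl fun t _ => ?_
    split_ifs <;> ring
  simpa only [Complex.ofReal_re, Complex.re_ofReal_mul, Complex.re_sum,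
    Complex.exp_ofReal_mul_I_re] using congrArg Complex.re hℂ

theorem sum_equispacedCos_pow_of_lt {k p : ℕ} (hpk : p < k) (θ : ℝ) :
    ∑ j, equispacedCos k θ j ^ p =
      k / 2 ^ p * ∑ t ∈ (Finset.range (p + 1)).filter (fun t => 2 * t = p), (p.choose t : ℝ) := by
  rw [sum_equispacedCos_pow k p (by omega), Finset.sum_filter, Finset.sum_filter]
  congr 1
  refine Finset.sum_congr rfl fun t ht => ?_
  simp only [int_dvd_two_mul_sub_iff_of_lt (Nat.lt_succ_iff.mp (Finset.mem_range.mp ht)) hpk]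
  split_ifs with h
  · have : (2 * t - p : ℝ) = 0 := by rw [sub_eq_zero]; exact_mod_cast h
    rw [this, zero_mul, cos_zero, mul_one]
  · rfl

theorem sum_equispacedCos_pow_self {k : ℕ} (hk : k ≠ 0) (θ : ℝ) :
    ∑ j, equispacedCos k θ j ^ k =
      k / 2 ^ k * (∑ t ∈ (Finset.range (k + 1)).filter (fun t => 2 * t = k), (k.choose t : ℝ)
        + 2 * cos (k * θ)) := by
  rw [sum_equispacedCos_pow k k hk, Finset.sum_filter, Finset.sum_filter]
  congr 1
  have hsplit : ∀ t ∈ Finset.range (k + 1),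
      (if (k : ℤ) ∣ 2 * t - k then (k.choose t : ℝ) * cos ((2 * t - k) * θ) else 0) =
        (if 2 * t = k then (k.choose t : ℝ) else 0) + (if t = 0 then cos (k * θ) else 0)
          + (if t = k then cos (k * θ) else 0) := fun t ht => by
    simp only [int_dvd_two_mul_sub_self_iff (Nat.lt_succ_iff.mp (Finset.mem_range.mp ht))]
    by_cases h2 : 2 * t = k
    · have : (2 * t - k : ℝ) = 0 := by rw [sub_eq_zero]; exact_mod_cast h2
      simp [h2, this, show t ≠ 0 by omega, show t ≠ k by omega]
    by_cases h0 : t = 0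
    · simp [h0, Ne.symm hk]
    by_cases htk : t = k
    · subst htk
      simp only [h2, h0, or_true, if_true, if_false, Nat.choose_self]
      ring_nf
    · simp [h2, h0, htk]
  rw [Finset.sum_congr rfl hsplit, Finset.sum_add_distrib, Finset.sum_add_distrib,
    Finset.sum_ite_eq', Finset.sum_ite_eq', if_pos (by simp), if_pos (by simp)]
  ring

theorem sum_equispacedCos_eq_zero {k : ℕ} (hk : 2 ≤ k) (θ : ℝ) :
    ∑ j, equispacedCos k θ j = 0 := by
  simpa using sum_equispacedCos_pow_of_lt (p := 1) hk θ

theorem sum_equispacedCos_pow_self_sub {k : ℕ} (hk : k ≠ 0) :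
    ∑ j, equispacedCos k 0 j ^ k - ∑ j, equispacedCos k (π / k) j ^ k = 4 * k / 2 ^ k := by
  rw [sum_equispacedCos_pow_self hk, sum_equispacedCos_pow_self hk,
    mul_div_cancel₀ π (Nat.cast_ne_zero.mpr hk), mul_zero, cos_zero, cos_pi]
  ring

theorem equispacedCos_zero_ne_pi_div (k : ℕ) (i j : Fin k) :
    equispacedCos k 0 i ≠ equispacedCos k (π / k) j := by
  have hk : (k : ℝ) ≠ 0 := by have := i.pos; positivity
  intro h
  obtain ⟨n, hn | hn⟩ := Real.cos_eq_cos_iff.mp h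
  · have : ((1 + 2 * j : ℤ) : ℝ) = ((2 * (n * k + i) : ℤ) : ℝ) := by
      field_simp at hn
      push_cast
      exact mul_left_cancel₀ Real.pi_ne_zero (by linear_combination hn)
    have := Int.cast_inj.mp this
    omega
  · have : ((1 + 2 * j : ℤ) : ℝ) = ((2 * (n * k - i) : ℤ) : ℝ) := by
      field_simp at hn
      push_cast
      exact mul_left_cancel₀ Real.pi_ne_zero (by linear_combination hn)
    have := Int.cast_inj.mp this
    omega

theorem sortedLoss_pos_of_forall_ne {k : ℕ} {u v : Fin k → ℝ} (i₀ : Fin k)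
    (h : ∀ i, u i ≠ v i₀) : 0 < sortedLoss u v := by
  obtain ⟨σ, hσ⟩ := exists_eq_ciInf_of_finite (f := fun σ : Equiv.Perm (Fin k) =>
    ∑ i, |u (σ i) - v i|)
  rw [sortedLoss, ← hσ]
  calc 0 < |u (σ i₀) - v i₀| := abs_pos.mpr (sub_ne_zero.mpr (h _))
    _ ≤ ∑ i, |u (σ i) - v i| :=
      Finset.single_le_sum (f := fun i => |u (σ i) - v i|) (fun _ _ => abs_nonneg _)
        (Finset.mem_univ i₀)

/-- Existence of a moment-matched two-point pair: for every `k ≥ 1`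
there are a constant `C_k > 0` and vectors `u, v` with entries bounded by 1 in absolute
value such that `m_1(u) = 0`, the power sums of `u` and `v` agree up to order `k−1`, and
both `W(u,v)` and `|m_k(u) − m_k(v)|` are at least `C_k`. -/
theorem moment_matched_two_point (k : ℕ) (hk : 1 ≤ k) :
    ∃ C : ℝ, 0 < C ∧ ∃ u v : Fin k → ℝ,
      (∀ i, |u i| ≤ 1) ∧ (∀ i, |v i| ≤ 1) ∧
      (∑ i, u i = 0) ∧
      (∀ p : ℕ, 1 ≤ p → p < k → ∑ i, u i ^ p = ∑ i, v i ^ p) ∧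
      C ≤ sortedLoss u v ∧ C ≤ |∑ i, u i ^ k - ∑ i, v i ^ k| := by
  suffices h : ∃ u v : Fin k → ℝ, (∀ i, |u i| ≤ 1) ∧ (∀ i, |v i| ≤ 1) ∧ ∑ i, u i = 0 ∧
      (∀ p : ℕ, 1 ≤ p → p < k → ∑ i, u i ^ p = ∑ i, v i ^ p) ∧
      (∃ i₀, ∀ i, u i ≠ v i₀) ∧ ∑ i, u i ^ k ≠ ∑ i, v i ^ k by
    obtain ⟨u, v, hu, hv, hsum, hmoments, ⟨i₀, hne⟩, hlast⟩ := h
    exact ⟨_, lt_min (sortedLoss_pos_of_forall_ne i₀ hne) (abs_pos.2 (sub_ne_zero.2 hlast)),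
      u, v, hu, hv, hsum, hmoments, min_le_left _ _, min_le_right _ _⟩
  obtain rfl | hk2 := hk.eq_or_lt
  · exact ⟨0, 1, by simp, by simp, by simp, by omega, ⟨0, fun _ => zero_ne_one⟩, by simp⟩
  · refine ⟨equispacedCos k 0, equispacedCos k (π / k), fun _ => abs_cos_le_one _,
      fun _ => abs_cos_le_one _, sum_equispacedCos_eq_zero hk2 0, fun p _ hpk => ?_,
      ⟨⟨0, by omega⟩, fun i => equispacedCos_zero_ne_pi_div k i _⟩, fun h => ?_⟩
    · rw [sum_equispacedCos_pow_of_lt hpk, sum_equispacedCos_pow_of_lt hpk]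
    · have := sum_equispacedCos_pow_self_sub (k := k) (by omega)
      rw [h, sub_self] at this
      have : (0 : ℝ) < 4 * k / 2 ^ k := by positivity
      linarith

end
end

section
/- Unbiasedness and variance of falling-factorial moment statistics in the Poisson–exponential mixture: let c ∈ Δ_k, let ϖ_1,…,ϖ_k be i.i.d. exponential random variables with rate d, set θ = ∑_{i=1}^k c_i ϖ_i, and conditionally on ϖ let Y ~ Poisson(nθ). For an integer ℓ ≥ 1 define Û_ℓ = Y(Y−1)⋯(Y−ℓ+1)/n^ℓ (equal to 0 when Y < ℓ). Then E[Û_ℓ] = E[θ^ℓ], and there exists a constant C_ℓ > 0 depending only on ℓ such that Var[Û_ℓ] ≤ C_ℓ / ( min{n,d}^ℓ · d^ℓ ). -/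
open MeasureTheory ProbabilityTheory Real
open scoped ENNReal NNReal

noncomputable section

/-- Joint law of `(ϖ, Y)` where `ϖ` has i.i.d. rate-`d` exponential coordinates and,
conditionally on `ϖ`, `Y ~ Poisson(n ∑_i c_i ϖ_i)`. -/
def thetaYLaw (n d k : ℕ) (c : Fin k → ℝ) : Measure ((Fin k → ℝ) × ℕ) :=
  (Measure.pi fun _ : Fin k => expMeas d).bind fun w =>
    (Measure.dirac w).prod (poissonMeas (n * ∑ i, c i * w i))

/-- The statistic `Û_ℓ = Y(Y−1)⋯(Y−ℓ+1)/n^ℓ` (automatically `0` when `Y < ℓ`). -/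
def fallingStat (n l : ℕ) (p : (Fin k → ℝ) × ℕ) : ℝ :=
  (∏ t ∈ Finset.range l, ((p.2 : ℝ) - t)) / (n : ℝ) ^ l

/-!
Conditionally on `ϖ`, `Y` is Poisson with mean `nθ`, and a Poisson(`λ`) variable has factorial
moments `E[Y(Y-1)⋯(Y-m+1)] = λ^m`; hence `E[Û_ℓ | ϖ] = θ^ℓ`, which is unbiasedness. For the
variance we use `Var ≤ E[Û_ℓ²]` together with the falling-factorial inequality
`(y)_ℓ² ≤ 2^ℓ (y)_{2ℓ} + (3ℓ)^ℓ (y)_ℓ`, which gives `E[Û_ℓ² | ϖ] ≤ 2^ℓ θ^{2ℓ} + (3ℓ)^ℓ θ^ℓ / n^ℓ`.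
Finally Jensen's inequality `θ^m ≤ ∑ c_i ϖ_i^m` and `E[ϖ_i^m] = m!/d^m` give `E[θ^m] ≤ m!/d^m`.
-/

open Finset in
theorem descFactorial_sq_le (l y : ℕ) :
    y.descFactorial l ^ 2 ≤ 2 ^ l * y.descFactorial (2 * l) + (3 * l) ^ l * y.descFactorial l := by
  rcases lt_or_ge y (3 * l) with hy | hy
  · calc y.descFactorial l ^ 2 = y.descFactorial l * y.descFactorial l := sq _
      _ ≤ (3 * l) ^ l * y.descFactorial l := by
        gcongr; exact (y.descFactorial_le_pow l).trans (Nat.pow_le_pow_left hy.le l)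
      _ ≤ _ := Nat.le_add_left _ _
  · -- for `t < l ≤ y / 3` each factor `y - t` is at most twice the factor `y - l - t`
    have hhalf : y.descFactorial l ≤ 2 ^ l * (y - l).descFactorial l := by
      rw [Nat.descFactorial_eq_prod_range, Nat.descFactorial_eq_prod_range]
      calc ∏ t ∈ range l, (y - t) ≤ ∏ t ∈ range l, 2 * (y - l - t) :=
            prod_le_prod' fun t ht => by have := mem_range.mp ht; omega
        _ = 2 ^ l * ∏ t ∈ range l, (y - l - t) := by
            rw [prod_mul_distrib, prod_const, card_range]
    calc y.descFactorial l ^ 2 ≤ y.descFactorial l * (2 ^ l * (y - l).descFactorial l) := by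
          rw [sq]; gcongr
      _ = 2 ^ l * y.descFactorial (2 * l) := by
          rw [← Nat.descFactorial_mul_descFactorial (by omega : l ≤ 2 * l),
            show 2 * l - l = l by omega]
          ring
      _ ≤ _ := Nat.le_add_right _ _

theorem hasSum_poisson_mul_descFactorial (r : ℝ) (m : ℕ) :
    HasSum (fun y : ℕ => exp (-r) * r ^ y / y.factorial * y.descFactorial m) (r ^ m) := by
  have hexp : HasSum (fun z : ℕ => exp (-r) * r ^ m * (r ^ z / z.factorial)) (r ^ m) := by
    have := (NormedSpace.expSeries_div_hasSum_exp r).mul_left (exp (-r) * r ^ m)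
    rwa [← Real.exp_eq_exp_ℝ, mul_right_comm, ← Real.exp_add, neg_add_cancel, Real.exp_zero,
      one_mul] at this
  refine (hasSum_nat_add_iff' m).mp ?_
  have hlow : ∑ y ∈ Finset.range m, exp (-r) * r ^ y / y.factorial * y.descFactorial m = 0 :=
    Finset.sum_eq_zero fun y hy => by
      rw [Nat.descFactorial_eq_zero_iff_lt.mpr (Finset.mem_range.mp hy), Nat.cast_zero, mul_zero]
  rw [hlow, sub_zero]
  refine hexp.congr_fun fun z => ?_
  have hfac : ((z + m).factorial : ℝ) = z.factorial * (z + m).descFactorial m := by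
    exact_mod_cast (Nat.add_sub_cancel z m ▸
      Nat.factorial_mul_descFactorial (Nat.le_add_left m z)).symm
  rw [hfac, pow_add]
  field_simp

theorem isProbabilityMeasure_poissonMeas {r : ℝ} (hr : 0 ≤ r) :
    IsProbabilityMeasure (poissonMeas r) := by
  have : poissonMeas r = poissonMeasure r.toNNReal := by
    simp only [poissonMeas, poissonMeasure, Real.coe_toNNReal _ hr]
  rw [this]
  infer_instance

theorem lintegral_poissonMeas (r : ℝ) (f : ℕ → ℝ≥0∞) :
    ∫⁻ y, f y ∂poissonMeas r = ∑' y, ENNReal.ofReal (exp (-r) * r ^ y / y.factorial) * f y := by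
  simp only [poissonMeas, lintegral_sum_measure, lintegral_smul_measure, lintegral_dirac,
    smul_eq_mul]

theorem lintegral_poissonMeas_ofReal_of_hasSum {r : ℝ} (hr : 0 ≤ r) {g : ℕ → ℝ}
    (hg : ∀ y, 0 ≤ g y) {a : ℝ} (h : HasSum (fun y => exp (-r) * r ^ y / y.factorial * g y) a) :
    ∫⁻ y, ENNReal.ofReal (g y) ∂poissonMeas r = ENNReal.ofReal a := by
  have hw : ∀ y : ℕ, 0 ≤ exp (-r) * r ^ y / y.factorial := fun y => by positivity
  simp_rw [lintegral_poissonMeas, ← ENNReal.ofReal_mul (hw _)]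
  rw [← ENNReal.ofReal_tsum_of_nonneg (fun y => mul_nonneg (hw y) (hg y)) h.summable, h.tsum_eq]

section MixedPoisson

variable {α : Type*} [MeasurableSpace α] (μ : Measure α) {rate : α → ℝ}

theorem measurable_dirac_prod_poissonMeas (hrate : Measurable rate) :
    Measurable fun w => (Measure.dirac w).prod (poissonMeas (rate w)) := by
  refine Measure.measurable_of_measurable_coe _ fun s hs => ?_
  have hsec : ∀ w, MeasurableSet (Prod.mk w ⁻¹' s) := fun w => measurable_prodMk_left hs
  simp_rw [Measure.dirac_prod, Measure.map_apply measurable_prodMk_left hs, poissonMeas,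
    Measure.sum_apply _ (hsec _), Measure.smul_apply, Measure.dirac_apply' _ (hsec _),
    smul_eq_mul]
  refine Measurable.tsum fun y => Measurable.mul (by fun_prop) ?_
  exact (measurable_one.indicator hs).comp (measurable_id.prodMk measurable_const)

theorem lintegral_bind_dirac_prod_poissonMeas (hrate : Measurable rate)
    {F : α × ℕ → ℝ≥0∞} (hF : Measurable F) :
    ∫⁻ p, F p ∂μ.bind (fun w => (Measure.dirac w).prod (poissonMeas (rate w)))
      = ∫⁻ w, ∫⁻ y, F (w, y) ∂poissonMeas (rate w) ∂μ := by
  rw [Measure.lintegral_bind (measurable_dirac_prod_poissonMeas hrate).aemeasurable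
    hF.aemeasurable]
  simp_rw [Measure.dirac_prod, lintegral_map hF measurable_prodMk_left]

theorem map_fst_bind_dirac_prod_poissonMeas (hrate : Measurable rate)
    (hpos : ∀ᵐ w ∂μ, 0 ≤ rate w) :
    (μ.bind fun w => (Measure.dirac w).prod (poissonMeas (rate w))).map Prod.fst = μ := by
  ext s hs
  rw [Measure.map_apply measurable_fst hs, Measure.bind_apply (measurable_fst hs)
    (measurable_dirac_prod_poissonMeas hrate).aemeasurable, ← lintegral_indicator_one hs]
  refine lintegral_congr_ae (hpos.mono fun w hw => ?_)
  have := isProbabilityMeasure_poissonMeas hw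
  dsimp only
  rw [← Set.prod_univ, Measure.prod_prod, measure_univ, mul_one, Measure.dirac_apply' _ hs]

end MixedPoisson

theorem expMeas_eq_withDensity_exponentialPDF (r : ℝ) :
    expMeas r = volume.withDensity (exponentialPDF r) := by
  rw [expMeas]
  exact congrArg _ (funext fun x => (exponentialPDF_eq r x).symm)

theorem measurable_exponentialPDF (r : ℝ) : Measurable (exponentialPDF r) :=
  (measurable_exponentialPDFReal r).ennreal_ofReal

instance sigmaFinite_expMeas (r : ℝ) : SigmaFinite (expMeas r) := by
  unfold expMeas
  infer_instance

theorem isProbabilityMeasure_expMeas {r : ℝ} (hr : 0 < r) : IsProbabilityMeasure (expMeas r) := by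
  rw [expMeas_eq_withDensity_exponentialPDF]
  exact isProbabilityMeasure_expMeasure hr

theorem ae_nonneg_expMeas (r : ℝ) : ∀ᵐ x ∂expMeas r, 0 ≤ x := by
  rw [expMeas_eq_withDensity_exponentialPDF,
    ae_withDensity_iff (measurable_exponentialPDF r)]
  exact ae_of_all _ fun x hx => not_lt.mp fun hneg => hx (exponentialPDF_of_neg hneg)

theorem lintegral_expMeas_pow {r : ℝ} (hr : 0 < r) (m : ℕ) :
    ∫⁻ x, ENNReal.ofReal (x ^ m) ∂expMeas r = ENNReal.ofReal (m.factorial / r ^ m) := by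
  have hgamma : ∫ x in Set.Ioi 0, r * exp (-(r * x)) * x ^ m = m.factorial / r ^ m := by
    have := integral_rpow_mul_exp_neg_mul_Ioi (a := m + 1) (by positivity) hr
    simp only [add_sub_cancel_right, Real.rpow_natCast, Real.Gamma_nat_eq_factorial] at this
    simp_rw [mul_assoc, integral_const_mul, mul_comm (exp _), this]
    rw [one_div, ← Nat.cast_add_one, Real.rpow_natCast, inv_pow, pow_succ]
    field_simp
  have hint : IntegrableOn (fun x => r * exp (-(r * x)) * x ^ m) (Set.Ioi 0) :=
    Integrable.of_integral_ne_zero (by rw [hgamma]; positivity)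
  rw [← hgamma, ofReal_integral_eq_lintegral_ofReal hint
      ((ae_restrict_iff' measurableSet_Ioi).mpr (ae_of_all _ fun x hx => by
        have : 0 < x := hx; positivity)),
    expMeas_eq_withDensity_exponentialPDF, lintegral_withDensity_eq_lintegral_mul _
      (measurable_exponentialPDF r) (by fun_prop),
    ← lintegral_indicator measurableSet_Ioi]
  refine lintegral_congr_ae ((Measure.ae_ne volume 0).mono fun x (hx : x ≠ 0) => ?_)
  rcases hx.lt_or_gt with hneg | hpos
  · simp [exponentialPDF_of_neg hneg, hneg.not_gt]
  · rw [Pi.mul_apply, exponentialPDF_of_nonneg hpos.le,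
      Set.indicator_of_mem (Set.mem_Ioi.mpr hpos), ← ENNReal.ofReal_mul (by positivity)]

theorem ae_nonneg_pi_expMeas {ι : Type*} [Fintype ι] (r : ℝ) :
    ∀ᵐ w ∂Measure.pi (fun _ : ι => expMeas r), ∀ i, 0 ≤ w i :=
  ae_all_iff.2 fun _ => Measure.tendsto_eval_ae_ae.eventually (ae_nonneg_expMeas r)

theorem lintegral_pow_sum_mul_le {ι : Type*} [Fintype ι] {r : ℝ} (hr : 0 < r) {c : ι → ℝ}
    (hc0 : ∀ i, 0 ≤ c i) (hc1 : ∑ i, c i = 1) (m : ℕ) :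
    ∫⁻ w, ENNReal.ofReal ((∑ i, c i * w i) ^ m) ∂Measure.pi (fun _ : ι => expMeas r)
      ≤ ENNReal.ofReal (m.factorial / r ^ m) := by
  have := isProbabilityMeasure_expMeas hr
  calc _ ≤ ∫⁻ w, ∑ i, ENNReal.ofReal (c i) * ENNReal.ofReal (w i ^ m)
          ∂Measure.pi (fun _ : ι => expMeas r) := by
        refine lintegral_mono_ae ((ae_nonneg_pi_expMeas r).mono fun w hw => ?_)
        have hjensen : (∑ i, c i * w i) ^ m ≤ ∑ i, c i * w i ^ m := by
          simpa only [smul_eq_mul] using (convexOn_pow m).map_sum_le (fun i _ => hc0 i) hc1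
            (fun i _ => Set.mem_Ici.mpr (hw i))
        calc _ ≤ ENNReal.ofReal (∑ i, c i * w i ^ m) := ENNReal.ofReal_le_ofReal hjensen
          _ = _ := by
            rw [ENNReal.ofReal_sum_of_nonneg fun i _ => mul_nonneg (hc0 i) (pow_nonneg (hw i) m)]
            simp_rw [ENNReal.ofReal_mul (hc0 _)]
    _ = ∑ i, ENNReal.ofReal (c i) * ENNReal.ofReal (m.factorial / r ^ m) := by
        rw [lintegral_finsetSum _ fun i _ => by fun_prop]
        refine Finset.sum_congr rfl fun i _ => ?_
        rw [lintegral_const_mul _ (by fun_prop), ← lintegral_expMeas_pow hr m]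
        exact congrArg _ ((measurePreserving_eval (fun _ : ι => expMeas r) i).lintegral_comp
          (by fun_prop : Measurable fun x : ℝ => ENNReal.ofReal (x ^ m)))
    _ = _ := by
        rw [← Finset.sum_mul, ← ENNReal.ofReal_sum_of_nonneg fun i _ => hc0 i, hc1,
          ENNReal.ofReal_one, one_mul]

theorem fallingStat_eq {k : ℕ} (n l : ℕ) (p : (Fin k → ℝ) × ℕ) :
    fallingStat n l p = p.2.descFactorial l / (n : ℝ) ^ l := by
  rw [fallingStat, ← descPochhammer_eval_eq_prod_range, descPochhammer_eval_eq_descFactorial]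

theorem measurable_fallingStat {k : ℕ} (n l : ℕ) :
    Measurable (fallingStat (k := k) n l) :=
  (Measurable.of_discrete
    (f := fun y : ℕ => (∏ t ∈ Finset.range l, ((y : ℝ) - t)) / (n : ℝ) ^ l)).comp measurable_snd

section ThetaY

variable {n d k : ℕ} {c : Fin k → ℝ}

theorem ae_sum_mul_nonneg (hc : ∀ i, 0 ≤ c i) :
    ∀ᵐ w ∂Measure.pi (fun _ : Fin k => expMeas d), 0 ≤ ∑ i, c i * w i :=
  (ae_nonneg_pi_expMeas _).mono fun _ hw => Finset.sum_nonneg fun i _ => mul_nonneg (hc i) (hw i)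

theorem map_fst_thetaYLaw (hc : ∀ i, 0 ≤ c i) :
    (thetaYLaw n d k c).map Prod.fst = Measure.pi fun _ : Fin k => expMeas d :=
  map_fst_bind_dirac_prod_poissonMeas _ (by fun_prop)
    ((ae_sum_mul_nonneg hc).mono fun _ hw => mul_nonneg n.cast_nonneg hw)

theorem isProbabilityMeasure_thetaYLaw (hd : 0 < d) (hc : ∀ i, 0 ≤ c i) :
    IsProbabilityMeasure (thetaYLaw n d k c) := by
  have := isProbabilityMeasure_expMeas (Nat.cast_pos.mpr hd : (0 : ℝ) < d)
  constructor
  rw [← Set.preimage_univ (f := Prod.fst), ← Measure.map_apply measurable_fst .univ,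
    map_fst_thetaYLaw hc, measure_univ]

theorem lintegral_thetaYLaw_ofReal_of_hasSum (hc : ∀ i, 0 ≤ c i) {g : ℕ → ℝ}
    (hg : ∀ y, 0 ≤ g y) {G : ℝ → ℝ}
    (hG : ∀ r, 0 ≤ r → HasSum (fun y => exp (-r) * r ^ y / y.factorial * g y) (G r)) :
    ∫⁻ p, ENNReal.ofReal (g p.2) ∂thetaYLaw n d k c
      = ∫⁻ w, ENNReal.ofReal (G (n * ∑ i, c i * w i)) ∂Measure.pi fun _ : Fin k => expMeas d := by
  rw [thetaYLaw, lintegral_bind_dirac_prod_poissonMeas _ (by fun_prop) (by fun_prop)]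
  refine lintegral_congr_ae ((ae_sum_mul_nonneg hc).mono fun w hw => ?_)
  have hr := mul_nonneg n.cast_nonneg hw
  exact lintegral_poissonMeas_ofReal_of_hasSum hr hg (hG _ hr)

theorem integral_fallingStat_thetaYLaw (hn : 0 < n) (hc : ∀ i, 0 ≤ c i) (l : ℕ) :
    ∫ p, fallingStat n l p ∂thetaYLaw n d k c
      = ∫ p, (∑ i, c i * p.1 i) ^ l ∂thetaYLaw n d k c := by
  have hn' : (n : ℝ) ≠ 0 := Nat.cast_ne_zero.mpr hn.ne'
  have hmarginal : ∫ p, (∑ i, c i * p.1 i) ^ l ∂thetaYLaw n d k c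
      = ∫ w, (∑ i, c i * w i) ^ l ∂Measure.pi fun _ : Fin k => expMeas d := by
    rw [← map_fst_thetaYLaw hc, integral_map measurable_fst.aemeasurable
      (Measurable.aestronglyMeasurable (by fun_prop))]
  rw [hmarginal,
    integral_eq_lintegral_of_nonneg_ae (ae_of_all _ fun p => by rw [fallingStat_eq]; positivity)
      (measurable_fallingStat n l).aestronglyMeasurable,
    integral_eq_lintegral_of_nonneg_ae ((ae_sum_mul_nonneg hc).mono fun w hw => pow_nonneg hw l)
      (Measurable.aestronglyMeasurable (by fun_prop))]
  simp_rw [fallingStat_eq]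
  rw [lintegral_thetaYLaw_ofReal_of_hasSum hc
    (g := fun y => (y.descFactorial l : ℝ) / (n : ℝ) ^ l) (fun y => by positivity)
    (G := fun r => r ^ l / (n : ℝ) ^ l) fun r _ => by
      simpa only [mul_div_assoc] using (hasSum_poisson_mul_descFactorial r l).div_const _]
  simp_rw [mul_pow, mul_div_cancel_left₀ _ (pow_ne_zero l hn')]

theorem integral_fallingStat_sq_le (hn : 0 < n) (hd : 0 < d) (hc0 : ∀ i, 0 ≤ c i)
    (hc1 : ∑ i, c i = 1) (l : ℕ) :
    ∫ p, fallingStat n l p ^ 2 ∂thetaYLaw n d k c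
      ≤ 2 ^ l * (2 * l).factorial / (d : ℝ) ^ (2 * l)
        + (3 * l) ^ l * l.factorial / ((n : ℝ) ^ l * (d : ℝ) ^ l) := by
  have hn' : (n : ℝ) ≠ 0 := Nat.cast_ne_zero.mpr hn.ne'
  have hd' : (0 : ℝ) < d := Nat.cast_pos.mpr hd
  have hbound : ∀ y : ℕ, (y.descFactorial l / (n : ℝ) ^ l) ^ 2 ≤
      (2 ^ l * y.descFactorial (2 * l) + (3 * l) ^ l * y.descFactorial l) / ((n : ℝ) ^ l) ^ 2 := by
    intro y
    rw [div_pow]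
    gcongr
    exact_mod_cast descFactorial_sq_le l y
  have hsum : ∀ r : ℝ, HasSum (fun y : ℕ => exp (-r) * r ^ y / y.factorial *
      ((2 ^ l * y.descFactorial (2 * l) + (3 * l) ^ l * y.descFactorial l) / ((n : ℝ) ^ l) ^ 2))
      ((2 ^ l * r ^ (2 * l) + (3 * l) ^ l * r ^ l) / ((n : ℝ) ^ l) ^ 2) := fun r => by
    refine ((((hasSum_poisson_mul_descFactorial r (2 * l)).mul_left (2 ^ l : ℝ)).add
      ((hasSum_poisson_mul_descFactorial r l).mul_left ((3 * l : ℝ) ^ l))).div_const _).congr_fun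
        fun y => ?_
    ring
  rw [integral_eq_lintegral_of_nonneg_ae (ae_of_all _ fun p => sq_nonneg _)
    ((measurable_fallingStat n l).pow_const 2).aestronglyMeasurable]
  refine ENNReal.toReal_le_of_le_ofReal (by positivity) ?_
  calc ∫⁻ p, ENNReal.ofReal (fallingStat n l p ^ 2) ∂thetaYLaw n d k c
      ≤ ∫⁻ p, ENNReal.ofReal ((2 ^ l * p.2.descFactorial (2 * l)
          + (3 * l) ^ l * p.2.descFactorial l) / ((n : ℝ) ^ l) ^ 2) ∂thetaYLaw n d k c :=
        lintegral_mono fun p => ENNReal.ofReal_le_ofReal (by rw [fallingStat_eq]; exact hbound _)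
    _ = ∫⁻ w, ENNReal.ofReal (2 ^ l) * ENNReal.ofReal ((∑ i, c i * w i) ^ (2 * l))
          + ENNReal.ofReal ((3 * l) ^ l / (n : ℝ) ^ l) * ENNReal.ofReal ((∑ i, c i * w i) ^ l)
          ∂Measure.pi fun _ : Fin k => expMeas d := by
        rw [lintegral_thetaYLaw_ofReal_of_hasSum hc0 (fun y => by positivity) fun r _ => hsum r]
        refine lintegral_congr_ae ((ae_sum_mul_nonneg hc0).mono fun w hw => ?_)
        dsimp only
        rw [← ENNReal.ofReal_mul (by positivity), ← ENNReal.ofReal_mul (by positivity),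
          ← ENNReal.ofReal_add (by positivity) (by positivity)]
        congr 1
        field_simp
        ring
    _ ≤ ENNReal.ofReal (2 ^ l) * ENNReal.ofReal ((2 * l).factorial / (d : ℝ) ^ (2 * l))
          + ENNReal.ofReal ((3 * l) ^ l / (n : ℝ) ^ l)
            * ENNReal.ofReal (l.factorial / (d : ℝ) ^ l) := by
        rw [lintegral_add_left (by fun_prop), lintegral_const_mul _ (by fun_prop),
          lintegral_const_mul _ (by fun_prop)]
        gcongr <;> exact lintegral_pow_sum_mul_le hd' hc0 hc1 _
    _ = _ := by
        rw [← ENNReal.ofReal_mul (by positivity), ← ENNReal.ofReal_mul (by positivity),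
          ← ENNReal.ofReal_add (by positivity) (by positivity)]
        congr 1
        field_simp

end ThetaY

theorem falling_factorial_moments_general (l : ℕ) :
    ∃ C : ℝ, 0 < C ∧
      ∀ n d k : ℕ, 1 ≤ n → 1 ≤ d → 1 ≤ k → ∀ c ∈ simplex k,
        (∫ p, fallingStat n l p ∂ thetaYLaw n d k c
            = ∫ p, (∑ i, c i * p.1 i) ^ l ∂ thetaYLaw n d k c) ∧
        variance (fallingStat n l) (thetaYLaw n d k c)
          ≤ C / ((min (n : ℝ) (d : ℝ)) ^ l * (d : ℝ) ^ l) := by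
  refine ⟨2 ^ l * (2 * l).factorial + (3 * l) ^ l * l.factorial, by positivity, ?_⟩
  rintro n d k hn hd - c ⟨hc0, hc1⟩
  have := isProbabilityMeasure_thetaYLaw (n := n) hd hc0
  refine ⟨integral_fallingStat_thetaYLaw hn hc0 l, ?_⟩
  calc variance (fallingStat n l) (thetaYLaw n d k c)
      ≤ ∫ p, fallingStat n l p ^ 2 ∂thetaYLaw n d k c :=
        variance_le_expectation_sq (measurable_fallingStat n l).aestronglyMeasurable
    _ ≤ 2 ^ l * (2 * l).factorial / ((d : ℝ) ^ l * (d : ℝ) ^ l)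
          + (3 * l) ^ l * l.factorial / ((n : ℝ) ^ l * (d : ℝ) ^ l) := by
        rw [← pow_add, ← two_mul]
        exact integral_fallingStat_sq_le hn hd hc0 hc1 l
    _ ≤ 2 ^ l * (2 * l).factorial / ((min (n : ℝ) d) ^ l * (d : ℝ) ^ l)
          + (3 * l) ^ l * l.factorial / ((min (n : ℝ) d) ^ l * (d : ℝ) ^ l) := by
        gcongr
        exacts [min_le_right _ _, min_le_left _ _]
    _ = _ := by rw [← add_div]

/-- Unbiasedness and variance of falling-factorial moment statistics in
the Poisson–exponential mixture: `E[Û_ℓ] = E[θ^ℓ]` with `θ = ∑_i c_i ϖ_i`, and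
`Var[Û_ℓ] ≤ C_ℓ/(min{n,d}^ℓ d^ℓ)` for a constant `C_ℓ` depending only on `ℓ`. -/
theorem falling_factorial_moments (l : ℕ) (hl : 1 ≤ l) :
    ∃ C : ℝ, 0 < C ∧
      ∀ n d k : ℕ, 1 ≤ n → 1 ≤ d → 1 ≤ k → ∀ c ∈ simplex k,
        (∫ p, fallingStat n l p ∂ thetaYLaw n d k c
            = ∫ p, (∑ i, c i * p.1 i) ^ l ∂ thetaYLaw n d k c) ∧
        variance (fallingStat n l) (thetaYLaw n d k c)
          ≤ C / ((min (n : ℝ) (d : ℝ)) ^ l * (d : ℝ) ^ l) :=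
  falling_factorial_moments_general l

end
end

section
/- Stability of real roots of a monic polynomial under constant perturbation: let f be a monic polynomial of degree k over ℝ with k real roots x_1,…,x_k that are pairwise distinct, and let δ = min_{i ≠ j} |x_i − x_j|. Then for every real ε with 0 < ε < (δ/2)^k, the polynomial f + ε also has k real roots x_1^ε,…,x_k^ε (counted with multiplicity), and these can be indexed so that the 1-Wasserstein distance between the empirical measures satisfies (1/k)·min over permutations σ of ∑_{i=1}^k |x_i − x_{σ(i)}^ε| ≤ δ/2. -/
/-!
For each root `x i` of `f = ∏ j, (X - x j)`, the product `f (x i - δ/2) * f (x i + δ/2)` equals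
`∏ j, ((x i - x j)^2 - δ^2/4)`, in which only the factor `j = i` is negative, and both values have
absolute value at least `(δ/2)^k > ε`. Hence `f + ε` changes sign on `(x i - δ/2, x i + δ/2)` and
has a root `r i` there. These intervals are disjoint, so the `r i` are `k` distinct roots of the
monic degree-`k` polynomial `f + ε`, which is therefore `∏ i, (X - r i)`; matching `x i` with `r i`
moves each root by less than `δ/2`.
-/

open MeasureTheory ProbabilityTheory Real
open scoped ENNReal NNReal

noncomputable section

section

open Polynomial Finset

variable {ι 𝕜 : Type*} [Fintype ι] [CommRing 𝕜] [LinearOrder 𝕜] [IsStrictOrderedRing 𝕜]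

theorem exists_mem_Ioo_eq_zero_of_mul_neg {α : Type*} [ConditionallyCompleteLinearOrder α]
    [TopologicalSpace α] [OrderTopology α] [DenselyOrdered α] [TopologicalSpace 𝕜]
    [OrderClosedTopology 𝕜] {g : α → 𝕜} {a b : α} (hab : a ≤ b)
    (hg : ContinuousOn g (Set.Icc a b)) (h : g a * g b < 0) : ∃ c ∈ Set.Ioo a b, g c = 0 := by
  rcases mul_neg_iff.1 h with ⟨ha, hb⟩ | ⟨ha, hb⟩
  · exact intermediate_value_Ioo' hab hg ⟨hb, ha⟩
  · exact intermediate_value_Ioo hab hg ⟨ha, hb⟩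

theorem add_mul_add_neg_of_mul_neg {u v ε : 𝕜} (huv : u * v < 0) (hu : |ε| < |u|)
    (hv : |ε| < |v|) : (u + ε) * (v + ε) < 0 := by
  rcases mul_neg_iff.1 huv with ⟨hu0, hv0⟩ | ⟨hu0, hv0⟩
  · rw [abs_of_pos hu0] at hu
    rw [abs_of_neg hv0] at hv
    exact mul_neg_of_pos_of_neg (by linarith [neg_abs_le ε]) (by linarith [le_abs_self ε])
  · rw [abs_of_neg hu0] at hu
    rw [abs_of_pos hv0] at hv
    exact mul_neg_of_neg_of_pos (by linarith [le_abs_self ε]) (by linarith [neg_abs_le ε])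

theorem prod_sub_mul_prod_add_neg (x : ι → 𝕜) (i : ι) {h : 𝕜} (hh : 0 < h)
    (hgap : ∀ j ≠ i, h < |x i - x j|) :
    (∏ j, (x i - h - x j)) * ∏ j, (x i + h - x j) < 0 := by
  classical
  rw [← prod_mul_distrib, ← mul_prod_erase univ _ (mem_univ i)]
  refine mul_neg_of_neg_of_pos (by nlinarith) (prod_pos fun j hj => ?_)
  have hlt : h ^ 2 < (x i - x j) ^ 2 := by
    rw [← sq_abs (x i - x j)]
    exact pow_lt_pow_left₀ (hgap j (ne_of_mem_erase hj)) hh.le two_ne_zero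
  nlinarith

theorem pow_card_le_abs_prod_sub (x : ι → 𝕜) {t h : 𝕜} (hh : 0 ≤ h) (ht : ∀ j, h ≤ |t - x j|) :
    h ^ Fintype.card ι ≤ |∏ j, (t - x j)| := by
  rw [abs_prod, ← card_univ, ← prod_const]
  exact prod_le_prod (fun _ _ => hh) fun j _ => ht j

theorem exists_isRoot_prod_X_sub_C_add_C {x : ι → ℝ} {δ ε : ℝ} (hδ : 0 < δ)
    (hgap : Pairwise fun i j => δ ≤ |x i - x j|) (hε : |ε| < (δ / 2) ^ Fintype.card ι) (i : ι) :
    ∃ r, |x i - r| < δ / 2 ∧ (∏ j, (X - C (x j)) + C ε).IsRoot r := by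
  set F : ℝ → ℝ := fun t => ∏ j, (t - x j)
  have hF_eval : ∀ t, (∏ j, (X - C (x j)) + C ε).eval t = F t + ε := fun t => by
    simp [F, eval_prod]
  have hF_large : ∀ t, |t - x i| = δ / 2 → |ε| < |F t| := fun t ht => by
    refine hε.trans_le (pow_card_le_abs_prod_sub x (by positivity) fun j => ?_)
    rcases eq_or_ne j i with rfl | hji
    · exact ht.ge
    · linarith [hgap hji.symm, abs_sub_le (x i) t (x j), abs_sub_comm t (x i)]
  have hsign : F (x i - δ / 2) * F (x i + δ / 2) < 0 :=
    prod_sub_mul_prod_add_neg x i (half_pos hδ) fun j hji => by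
      linarith [hgap hji.symm]
  obtain ⟨r, hr, hroot⟩ := exists_mem_Ioo_eq_zero_of_mul_neg (g := fun t => F t + ε)
    (by linarith) (by fun_prop) (add_mul_add_neg_of_mul_neg hsign
      (hF_large _ (by rw [sub_sub_cancel_left, abs_neg, abs_of_pos (half_pos hδ)]))
      (hF_large _ (by rw [add_sub_cancel_left, abs_of_pos (half_pos hδ)])))
  refine ⟨r, abs_sub_lt_iff.2 ⟨by linarith [hr.1], by linarith [hr.2]⟩, ?_⟩
  rw [IsRoot.def, hF_eval, hroot]

theorem Polynomial.isMonicOfDegree_prod_X_sub_C {R : Type*} [CommRing R] [Nontrivial R]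
    (r : ι → R) : IsMonicOfDegree (∏ i, (X - C (r i))) (Fintype.card ι) :=
  ⟨by simp [natDegree_prod_of_monic _ _ fun i _ => monic_X_sub_C (r i)],
    monic_prod_of_monic _ _ fun i _ => monic_X_sub_C (r i)⟩

theorem Polynomial.IsMonicOfDegree.eq_prod_X_sub_C_of_injective {R : Type*} [CommRing R]
    [IsDomain R] {p : R[X]} (hp : IsMonicOfDegree p (Fintype.card ι)) {r : ι → R}
    (hr : Function.Injective r) (hroot : ∀ i, p.IsRoot (r i)) : p = ∏ i, (X - C (r i)) := by
  have hdvd : ∏ i, (X - C (r i)) ∣ p := by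
    have := (Multiset.prod_X_sub_C_dvd_iff_le_roots hp.ne_zero (univ.val.map r)).2 <|
      (Multiset.le_iff_subset (univ.nodup.map hr)).2 fun a ha => by
        obtain ⟨i, -, rfl⟩ := Multiset.mem_map.1 ha
        exact (mem_roots hp.ne_zero).2 (hroot i)
    simpa [Multiset.map_map, Function.comp_def] using this
  have hprod := isMonicOfDegree_prod_X_sub_C r
  exact eq_of_monic_of_dvd_of_natDegree_le hprod.monic hp.monic hdvd
    (hp.natDegree_eq.trans hprod.natDegree_eq.symm).le

end

theorem sortedLoss_le_sum_abs_sub {k : ℕ} (c c' : Fin k → ℝ) :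
    sortedLoss c c' ≤ ∑ i, |c i - c' i| :=
  (ciInf_le (Set.finite_range _).bddBelow 1).trans_eq (by simp)

theorem root_stability_general (k : ℕ) (x : Fin k → ℝ)
    (f : Polynomial ℝ) (hf : f = ∏ i, (Polynomial.X - Polynomial.C (x i)))
    (δ : ℝ) (hδ : IsLeast {r : ℝ | ∃ i j : Fin k, i ≠ j ∧ r = |x i - x j|} δ)
    (ε : ℝ) (hε0 : 0 < ε) (hεk : ε < (δ / 2) ^ k) :
    ∃ xe : Fin k → ℝ,
      f + Polynomial.C ε = ∏ i, (Polynomial.X - Polynomial.C (xe i)) ∧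
      (1 / (k : ℝ)) * sortedLoss x xe ≤ δ / 2 := by
  obtain ⟨⟨i₀, j₀, -, hδ_eq⟩, hδ_le⟩ := hδ
  have hk : k ≠ 0 := i₀.pos.ne'
  have hδ_pos : 0 < δ := by
    refine (hδ_eq ▸ abs_nonneg _ : 0 ≤ δ).lt_of_ne fun h => ?_
    rw [← h, zero_div, zero_pow hk] at hεk
    linarith
  have hgap : Pairwise fun i j => δ ≤ |x i - x j| := fun i j hij => hδ_le ⟨i, j, hij, rfl⟩
  choose r hr_near hr_root using exists_isRoot_prod_X_sub_C_add_C hδ_pos hgap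
    (by rwa [abs_of_pos hε0, Fintype.card_fin])
  have hr_inj : Function.Injective r := by
    intro i j hij
    by_contra hne
    have hi := hr_near i
    rw [hij] at hi
    linarith [hgap hne, hr_near j, abs_sub_le (x i) (r j) (x j), abs_sub_comm (r j) (x j)]
  refine ⟨r, ?_, ?_⟩
  · rw [hf]
    exact ((Polynomial.isMonicOfDegree_prod_X_sub_C x).add_right (by simpa using i₀.pos))
      |>.eq_prod_X_sub_C_of_injective hr_inj hr_root
  · calc 1 / (k : ℝ) * sortedLoss x r ≤ 1 / k * ∑ _i : Fin k, δ / 2 := by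
          gcongr
          exact (sortedLoss_le_sum_abs_sub x r).trans (Finset.sum_le_sum fun i _ => (hr_near i).le)
      _ = δ / 2 := by
          rw [Finset.sum_const, Finset.card_univ, Fintype.card_fin, nsmul_eq_mul]
          field_simp [hk]

/-- Stability of real roots of a monic polynomial under constant
perturbation: let `f = ∏ (X − x_i)` have pairwise-distinct real roots `x_1,…,x_k` with
minimal gap `δ`.  Then for `0 < ε < (δ/2)^k`, the polynomial `f + ε` also has `k` real
roots `x^ε_1,…,x^ε_k` (with multiplicity), and the 1-Wasserstein distance between the two
empirical root measures is at most `δ/2`. -/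
theorem root_stability (k : ℕ) (x : Fin k → ℝ) (hx : Function.Injective x)
    (f : Polynomial ℝ) (hf : f = ∏ i, (Polynomial.X - Polynomial.C (x i)))
    (δ : ℝ) (hδ : IsLeast {r : ℝ | ∃ i j : Fin k, i ≠ j ∧ r = |x i - x j|} δ)
    (ε : ℝ) (hε0 : 0 < ε) (hεk : ε < (δ / 2) ^ k) :
    ∃ xe : Fin k → ℝ,
      f + Polynomial.C ε = ∏ i, (Polynomial.X - Polynomial.C (xe i)) ∧
      (1 / (k : ℝ)) * sortedLoss x xe ≤ δ / 2 :=
  root_stability_general k x f hf δ hδ ε hε0 hεk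

end
end
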